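/- Let (V, ℓ) be an orthogonalizable non-Archimedean normed vector space with a norm-nonincreasing differential ∂ (∂² = 0, ℓ(∂v) ≤ ℓ(v)), and let {x_1,…,x_N, y_1,…,y_M, z_1,…,z_M} be a singular value decomposition basis (orthogonal, ∂x_i = 0, ∂z_j = y_j). Suppose {w_1,…,w_{N+2M}} is any other orthogonal basis of V. Then the multiset of values {ℓ(x_i)} ∪ {ℓ(y_j)} ∪ {ℓ(z_j)} equals the multiset {ℓ(w_k)}. -/

import Mathlib

open Classical

/-
In an orthogonal basis `b`, a vector has `ℓ v ≤ t` iff it only involves basis vectors with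
`ℓ (b i) ≤ t`; so the sublevel subspace `{v | ℓ v ≤ t}` is spanned by those basis vectors,
and the number of basis vectors with `ℓ (b i) ≤ t` is its dimension, independent of the basis.
A finite multiset in a linear order is determined by these counts for all `t`.
-/

theorem Multiset.card_filter_le_eq_card_filter_lt_add_count {α : Type*} [LinearOrder α]
    (s : Multiset α) (v : α) :
    (s.filter (· ≤ v)).card = (s.filter (· < v)).card + s.count v := by
  induction s using Multiset.induction_on with
  | empty => simp
  | cons a s ih =>
    simp only [Multiset.filter_cons, Multiset.count_cons, Multiset.card_add]
    rcases lt_trichotomy a v with h | rfl | h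
    · simp [h, h.le, h.ne', ih]; omega
    · simp [ih]; omega
    · simp [not_le.2 h, not_lt.2 h.le, h.ne, ih]

theorem Multiset.card_filter_lt_eq_of_card_filter_le_eq {α : Type*} [LinearOrder α]
    {A B : Multiset α} (h : ∀ t, (A.filter (· ≤ t)).card = (B.filter (· ≤ t)).card)
    (v : α) :
    (A.filter (· < v)).card = (B.filter (· < v)).card := by
  by_cases hne : (A + B).filter (· < v) = 0
  · rw [Multiset.filter_add, add_eq_zero] at hne
    rw [hne.1, hne.2]
  -- below `v`, the elements of `A + B` are exactly those below the largest of them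
  obtain ⟨t, ht, hmax⟩ := Multiset.exists_max_image id hne
  have htv : t < v := (Multiset.mem_filter.1 ht).2
  have hiff : ∀ C ≤ A + B, C.filter (· < v) = C.filter (· ≤ t) := fun C hC =>
    Multiset.filter_congr fun u hu =>
      ⟨fun huv => hmax u (Multiset.mem_filter.2 ⟨Multiset.mem_of_le hC hu, huv⟩),
        fun hut => hut.trans_lt htv⟩
  rw [hiff A (Multiset.le_add_right A B), hiff B (Multiset.le_add_left B A)]
  exact h t

theorem Multiset.eq_of_card_filter_le_eq {α : Type*} [LinearOrder α]
    {A B : Multiset α} (h : ∀ t, (A.filter (· ≤ t)).card = (B.filter (· ≤ t)).card) :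
    A = B := by
  ext v
  have hA := A.card_filter_le_eq_card_filter_lt_add_count v
  have hB := B.card_filter_le_eq_card_filter_lt_add_count v
  have := Multiset.card_filter_lt_eq_of_card_filter_le_eq h v
  have := h v
  omega

theorem Finset.univ_val_map_sumElim {α β γ : Type*} [Fintype α] [Fintype β]
    (f : α → γ) (g : β → γ) :
    (Finset.univ : Finset (α ⊕ β)).val.map (Sum.elim f g) =
      Finset.univ.val.map f + Finset.univ.val.map g := by
  rw [← Finset.univ_disjSum_univ, Finset.val_disjSum, Multiset.map_disjSum]
  rfl

section Sublevel

variable {k V : Type*} [Field k] [AddCommGroup V] [Module k V] (ℓ : V → EReal)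

variable (k) in
def IsOrthogonalFamily {ι : Type*} [Fintype ι] (e : ι → V) : Prop :=
  ∀ a : ι → k, ℓ (∑ i, a i • e i) =
    (Finset.univ.filter fun i => a i ≠ 0).sup fun i => ℓ (a i • e i)

def sublevelSubmodule (h0 : ℓ 0 = ⊥)
    (hsmul : ∀ (a : k) (x : V), a ≠ 0 → ℓ (a • x) = ℓ x)
    (hadd : ∀ x y : V, ℓ (x + y) ≤ max (ℓ x) (ℓ y)) (t : EReal) : Submodule k V where
  carrier := {v | ℓ v ≤ t}
  zero_mem' := show ℓ 0 ≤ t from h0 ▸ bot_le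
  add_mem' ha hb := (hadd _ _).trans (max_le ha hb)
  smul_mem' a x hx := by
    by_cases ha : a = 0
    · simp only [ha, zero_smul, Set.mem_ofPred_eq, h0, bot_le]
    · simpa only [Set.mem_ofPred_eq, hsmul a x ha] using hx

variable {ℓ}

theorem IsOrthogonalFamily.apply_smul_le {ι : Type*} [Fintype ι] {e : ι → V}
    (he : IsOrthogonalFamily k ℓ e) (a : ι → k) {i : ι} (hi : a i ≠ 0) :
    ℓ (a i • e i) ≤ ℓ (∑ j, a j • e j) := by
  rw [he a]
  exact Finset.le_sup (f := fun j => ℓ (a j • e j)) (by simpa using hi)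

variable {h0 : ℓ 0 = ⊥} {hsmul : ∀ (a : k) (x : V), a ≠ 0 → ℓ (a • x) = ℓ x}
  {hadd : ∀ x y : V, ℓ (x + y) ≤ max (ℓ x) (ℓ y)}

theorem sublevelSubmodule_eq_span {ι : Type*} [Fintype ι] (b : Module.Basis ι k V)
    (hb : IsOrthogonalFamily k ℓ b) (t : EReal) :
    sublevelSubmodule ℓ h0 hsmul hadd t = Submodule.span k (b '' {i | ℓ (b i) ≤ t}) := by
  refine le_antisymm (fun v hv => ?_) (Submodule.span_le.2 ?_)
  · rw [← b.sum_repr v]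
    refine Submodule.sum_mem _ fun i _ => ?_
    by_cases hi : b.repr v i = 0
    · simp [hi]
    refine Submodule.smul_mem _ _ (Submodule.subset_span ⟨i, ?_, rfl⟩)
    have := hb.apply_smul_le (b.repr v) hi
    rw [hsmul _ _ hi, b.sum_repr] at this
    exact this.trans hv
  · rintro _ ⟨i, hi, rfl⟩
    exact hi

theorem card_filter_le_eq_finrank_sublevelSubmodule {ι : Type*} [Fintype ι]
    (b : Module.Basis ι k V) (hb : IsOrthogonalFamily k ℓ b) (t : EReal) :
    (Finset.univ.filter fun i => ℓ (b i) ≤ t).card =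
      Module.finrank k (sublevelSubmodule ℓ h0 hsmul hadd t) := by
  rw [sublevelSubmodule_eq_span b hb, Set.image_eq_range, finrank_span_eq_card]
  · exact (Fintype.card_subtype _).symm
  · exact b.linearIndependent.comp (fun i : {i | ℓ (b i) ≤ t} => i.val) Subtype.val_injective

theorem univ_val_map_eq_of_isOrthogonalFamily {ι κ : Type*} [Fintype ι] [Fintype κ]
    (h0 : ℓ 0 = ⊥) (hsmul : ∀ (a : k) (x : V), a ≠ 0 → ℓ (a • x) = ℓ x)
    (hadd : ∀ x y : V, ℓ (x + y) ≤ max (ℓ x) (ℓ y))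
    (b : Module.Basis ι k V) (c : Module.Basis κ k V)
    (hb : IsOrthogonalFamily k ℓ b) (hc : IsOrthogonalFamily k ℓ c) :
    Finset.univ.val.map (fun i => ℓ (b i)) = Finset.univ.val.map (fun i => ℓ (c i)) := by
  refine Multiset.eq_of_card_filter_le_eq fun t => ?_
  simp only [Multiset.filter_map, Multiset.card_map]
  rw [← Finset.filter_val, ← Finset.filter_val]
  exact (card_filter_le_eq_finrank_sublevelSubmodule (h0 := h0) (hsmul := hsmul) (hadd := hadd)
    b hb t).trans (card_filter_le_eq_finrank_sublevelSubmodule c hc t).symm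

end Sublevel

theorem stmt_17_general {k V : Type*} [Field k] [AddCommGroup V] [Module k V]
    (ℓ : V → EReal)
    (hbot : ∀ x : V, ℓ x = ⊥ ↔ x = 0)
    (hsmul : ∀ (a : k) (x : V), a ≠ 0 → ℓ (a • x) = ℓ x)
    (hadd : ∀ x y : V, ℓ (x + y) ≤ max (ℓ x) (ℓ y))
    {N M : ℕ} (x : Fin N → V) (y z : Fin M → V)
    -- the combined family is an orthogonal basis of V
    (hli : LinearIndependent k (Sum.elim x (Sum.elim y z)))
    (hsp : Submodule.span k (Set.range (Sum.elim x (Sum.elim y z))) = ⊤)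
    (horth : ∀ a : Fin N ⊕ (Fin M ⊕ Fin M) → k,
      ℓ (∑ i, a i • Sum.elim x (Sum.elim y z) i) =
        (Finset.univ.filter fun i => a i ≠ 0).sup
          fun i => ℓ (a i • Sum.elim x (Sum.elim y z) i))
    -- another orthogonal basis
    (w : Fin (N + 2 * M) → V)
    (hwli : LinearIndependent k w)
    (hwsp : Submodule.span k (Set.range w) = ⊤)
    (hworth : ∀ a : Fin (N + 2 * M) → k,
      ℓ (∑ i, a i • w i) =
        (Finset.univ.filter fun i => a i ≠ 0).sup fun i => ℓ (a i • w i)) :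
    ((List.ofFn fun i => ℓ (x i)) ++ (List.ofFn fun j => ℓ (y j)) ++
        (List.ofFn fun j => ℓ (z j)) : Multiset EReal) =
      ((List.ofFn fun i => ℓ (w i)) : Multiset EReal) := by
  have key := univ_val_map_eq_of_isOrthogonalFamily ((hbot 0).2 rfl) hsmul hadd
    (Module.Basis.mk hli hsp.ge) (Module.Basis.mk hwli hwsp.ge)
    (by rw [Module.Basis.coe_mk]; exact horth)
    (by rw [Module.Basis.coe_mk]; exact hworth)
  simp only [Module.Basis.coe_mk] at key
  rw [← Multiset.coe_add, ← Multiset.coe_add, ← Fin.univ_val_map, ← Fin.univ_val_map,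
    ← Fin.univ_val_map, ← Fin.univ_val_map, ← key, add_assoc, ← Finset.univ_val_map_sumElim,
    ← Finset.univ_val_map_sumElim]
  congr 1
  ext (i | i | i) <;> rfl

/-- Let `(V, ℓ)` be an orthogonalizable non-Archimedean normed vector space
with a norm-nonincreasing differential `∂` (`∂² = 0`, `ℓ(∂v) ≤ ℓ(v)`), and let
`{x_1,…,x_N, y_1,…,y_M, z_1,…,z_M}` be a singular value decomposition basis (orthogonal,
`∂ x_i = 0`, `∂ z_j = y_j`).  If `{w_1,…,w_{N+2M}}` is any other orthogonal basis of `V`,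
then the multiset of values `{ℓ x_i} ∪ {ℓ y_j} ∪ {ℓ z_j}` equals the multiset `{ℓ w_k}`. -/
theorem stmt_17 {k V : Type*} [Field k] [AddCommGroup V] [Module k V]
    (ℓ : V → EReal)
    (hbot : ∀ x : V, ℓ x = ⊥ ↔ x = 0)
    (hsmul : ∀ (a : k) (x : V), a ≠ 0 → ℓ (a • x) = ℓ x)
    (hadd : ∀ x y : V, ℓ (x + y) ≤ max (ℓ x) (ℓ y))
    (D : V →ₗ[k] V)
    (hDD : ∀ v : V, D (D v) = 0)
    (hDℓ : ∀ v : V, ℓ (D v) ≤ ℓ v)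
    {N M : ℕ} (x : Fin N → V) (y z : Fin M → V)
    (hDx : ∀ i, D (x i) = 0) (hDz : ∀ j, D (z j) = y j)
    -- the combined family is an orthogonal basis of V
    (hli : LinearIndependent k (Sum.elim x (Sum.elim y z)))
    (hsp : Submodule.span k (Set.range (Sum.elim x (Sum.elim y z))) = ⊤)
    (horth : ∀ a : Fin N ⊕ (Fin M ⊕ Fin M) → k,
      ℓ (∑ i, a i • Sum.elim x (Sum.elim y z) i) =
        (Finset.univ.filter fun i => a i ≠ 0).sup
          fun i => ℓ (a i • Sum.elim x (Sum.elim y z) i))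
    -- another orthogonal basis
    (w : Fin (N + 2 * M) → V)
    (hwli : LinearIndependent k w)
    (hwsp : Submodule.span k (Set.range w) = ⊤)
    (hworth : ∀ a : Fin (N + 2 * M) → k,
      ℓ (∑ i, a i • w i) =
        (Finset.univ.filter fun i => a i ≠ 0).sup fun i => ℓ (a i • w i)) :
    ((List.ofFn fun i => ℓ (x i)) ++ (List.ofFn fun j => ℓ (y j)) ++
        (List.ofFn fun j => ℓ (z j)) : Multiset EReal) =
      ((List.ofFn fun i => ℓ (w i)) : Multiset EReal) :=
  stmt_17_general ℓ hbot hsmul hadd x y z hli hsp horth w hwli hwsp hworth
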